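/- arXiv:2207.08264 — 3 statements merged into one kernel-verified Lean document; each statement's English description precedes it below -/
import Mathlib

section
/- Let {f_k} be a nonincreasing sequence of real numbers bounded below, and let {Delta_k} be a sequence of positive reals. Suppose there exist constants eta_1 > 0, kappa > 0 and an infinite set S ⊆ N (the 'successful' iterations) such that f_k - f_{k+1} >= kappa * Delta_k^2 for all k ∈ S, f_{k+1} = f_k for k ∉ S, and such that there exist 0 < gamma_d < 1 <= gamma_i with Delta_{k+1} = gamma_i Delta_k for k ∈ S and Delta_{k+1} = gamma_d Delta_k for k ∉ S. Then lim_{k→∞} Delta_k = 0. -/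
/-!
Since `f` is nonincreasing and bounded below it converges, so its decrements `f k - f (k + 1)`
tend to `0`; on successful iterations they dominate `κ * Δ k ^ 2`, hence `Δ k → 0` along `S`.
Off `S` the radius contracts by `γd < 1`, so `Δ (k + 1) ≤ max (u k) (γd * Δ k)` with
`u k → 0`, and such a recursion forces `Δ k → 0`.
-/

open Filter Topology

theorem Antitone.tendsto_sub_succ_zero {f : ℕ → ℝ} {m : ℝ} (hf : Antitone f)
    (hm : ∀ k, m ≤ f k) : Tendsto (fun k ↦ f k - f (k + 1)) atTop (𝓝 0) := by
  have hlim := tendsto_atTop_ciInf hf ⟨m, Set.forall_mem_range.2 hm⟩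
  simpa using hlim.sub (hlim.comp (tendsto_add_atTop_nat 1))

theorem tendsto_zero_of_mul_sq_le {a d : ℕ → ℝ} {κ : ℝ} (hκ : 0 < κ)
    (hd : Tendsto d atTop (𝓝 0)) (had : ∀ k, κ * a k ^ 2 ≤ d k) :
    Tendsto a atTop (𝓝 0) := by
  have hsqrt : Tendsto (fun k ↦ √(d k / κ)) atTop (𝓝 0) := by
    simpa using (hd.div_const κ).sqrt
  refine squeeze_zero_norm (fun k ↦ ?_) hsqrt
  rw [Real.norm_eq_abs, ← Real.sqrt_sq_eq_abs]
  exact Real.sqrt_le_sqrt ((le_div_iff₀' hκ).2 (had k))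

theorem tendsto_zero_of_le_max_mul {x u : ℕ → ℝ} {q : ℝ} (hq0 : 0 ≤ q) (hq1 : q < 1)
    (hx : ∀ k, 0 ≤ x k) (hu : Tendsto u atTop (𝓝 0))
    (hrec : ∀ k, x (k + 1) ≤ max (u k) (q * x k)) : Tendsto x atTop (𝓝 0) := by
  refine tendsto_order.2 ⟨fun a ha ↦ Eventually.of_forall fun k ↦ ha.trans_le (hx k),
    fun ε hε ↦ ?_⟩
  obtain ⟨N, hN⟩ := eventually_atTop.1 ((tendsto_order.1 hu).2 (ε / 2) (half_pos hε))
  have hbound : ∀ j, x (N + j) ≤ max (ε / 2) (q ^ j * x N) := by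
    intro j
    induction j with
    | zero => simp
    | succ j ih =>
      calc x (N + j + 1) ≤ max (u (N + j)) (q * x (N + j)) := hrec _
        _ ≤ max (ε / 2) (q * max (ε / 2) (q ^ j * x N)) :=
          max_le_max (hN _ (Nat.le_add_right N j)).le (mul_le_mul_of_nonneg_left ih hq0)
        _ ≤ max (ε / 2) (q ^ (j + 1) * x N) := by
          rw [mul_max_of_nonneg _ _ hq0, ← mul_assoc, ← pow_succ']
          exact max_le (le_max_left _ _) (max_le_max (by nlinarith) le_rfl)
  have hgeom : Tendsto (fun j ↦ q ^ j * x N) atTop (𝓝 0) := by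
    simpa using (tendsto_pow_atTop_nhds_zero_of_lt_one hq0 hq1).mul_const (x N)
  obtain ⟨M, hM⟩ := eventually_atTop.1 ((tendsto_order.1 hgeom).2 ε hε)
  refine eventually_atTop.2 ⟨N + M, fun k hk ↦ ?_⟩
  obtain ⟨j, rfl⟩ := Nat.exists_eq_add_of_le (le_of_add_le_left hk)
  exact (hbound j).trans_lt (max_lt (half_lt_self hε) (hM j (by omega)))

theorem stmt3_general
    (f Δ : ℕ → ℝ) (fstar κ γd γi : ℝ) (S : Set ℕ)
    (hmono : Antitone f)
    (hlb : ∀ k, fstar ≤ f k)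
    (hΔpos : ∀ k, 0 < Δ k)
    (hκ : 0 < κ)
    (hdec : ∀ k ∈ S, f k - f (k + 1) ≥ κ * Δ k ^ 2)
    (hγd : 0 < γd) (hγd1 : γd < 1)
    (hinc : ∀ k ∈ S, Δ (k + 1) = γi * Δ k)
    (hdecΔ : ∀ k ∉ S, Δ (k + 1) = γd * Δ k) :
    Tendsto Δ atTop (nhds 0) := by
  have hdecr_nonneg : ∀ k, 0 ≤ f k - f (k + 1) := fun k ↦ sub_nonneg.2 (hmono k.le_succ)
  have hsucc : Tendsto (S.indicator Δ) atTop (𝓝 0) := by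
    refine tendsto_zero_of_mul_sq_le hκ (hmono.tendsto_sub_succ_zero hlb) fun k ↦ ?_
    by_cases hk : k ∈ S
    · simpa [hk] using hdec k hk
    · simpa [hk] using hdecr_nonneg k
  refine tendsto_zero_of_le_max_mul hγd.le hγd1 (fun k ↦ (hΔpos k).le)
    (by simpa using hsucc.const_mul γi) fun k ↦ ?_
  by_cases hk : k ∈ S
  · simp [hinc k hk, hk]
  · simp [hdecΔ k hk]

theorem stmt3
    (f Δ : ℕ → ℝ) (fstar η₁ κ γd γi : ℝ) (S : Set ℕ)
    (hmono : Antitone f)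
    (hlb : ∀ k, fstar ≤ f k)
    (hΔpos : ∀ k, 0 < Δ k)
    (hη₁ : 0 < η₁) (hκ : 0 < κ)
    (hS : S.Infinite)
    (hdec : ∀ k ∈ S, f k - f (k + 1) ≥ κ * Δ k ^ 2)
    (hsame : ∀ k ∉ S, f (k + 1) = f k)
    (hγd : 0 < γd) (hγd1 : γd < 1) (hγi : 1 ≤ γi)
    (hinc : ∀ k ∈ S, Δ (k + 1) = γi * Δ k)
    (hdecΔ : ∀ k ∉ S, Δ (k + 1) = γd * Δ k) :
    Tendsto Δ atTop (nhds 0) :=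
  stmt3_general f Δ fstar κ γd γi S hmono hlb hΔpos hκ hdec hγd hγd1 hinc hdecΔ
end

section
/- Let {theta_k} be a sequence of nonnegative reals (stationarity measures) and {Delta_k} positive reals. Suppose: (i) Delta_k → 0; (ii) there exist constants C > 0 and gamma_d ∈ (0,1) such that for every k, if Delta_k <= C * theta_k then Delta_{k+1} > Delta_k, while otherwise Delta_{k+1} >= gamma_d Delta_k. Then liminf_{k→∞} theta_k = 0. -/
open Filter Topology

theorem stmt6
    (θ Δ : ℕ → ℝ) (C γd : ℝ)
    (hθ : ∀ k, 0 ≤ θ k)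
    (hΔpos : ∀ k, 0 < Δ k)
    (hΔ0 : Tendsto Δ atTop (nhds 0))
    (hC : 0 < C) (hγd : 0 < γd) (hγd1 : γd < 1)
    (hstep : ∀ k, (Δ k ≤ C * θ k → Δ k < Δ (k + 1)) ∧
      (¬ Δ k ≤ C * θ k → γd * Δ k ≤ Δ (k + 1))) :
    Filter.liminf θ atTop = 0 := by
  have hbdd : IsBoundedUnder (· ≥ ·) atTop θ :=
    ⟨0, eventually_map.mpr (Eventually.of_forall hθ)⟩
  have key : ∀ ε : ℝ, 0 < ε → ∃ᶠ k in atTop, θ k ≤ ε := by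
    intro ε hε
    by_contra h
    rw [not_frequently] at h
    obtain ⟨K, hK⟩ := eventually_atTop.mp h
    set c := min (Δ K) (γd * (C * ε)) with hc_def
    have hc : 0 < c := lt_min (hΔpos K) (by positivity)
    have hlow : ∀ k, K ≤ k → c ≤ Δ k := by
      intro k hk
      induction k, hk using Nat.le_induction with
      | base => exact min_le_left _ _
      | succ n hn ih =>
        by_cases hcase : Δ n ≤ C * θ n
        · exact ih.trans ((hstep n).1 hcase).le
        · have hθn : ε < θ n := lt_of_not_ge (hK n hn)
          have h1 : γd * (C * ε) ≤ γd * (C * θ n) := by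
            have := mul_lt_mul_of_pos_left hθn hC
            nlinarith
          have h2 : C * θ n < Δ n := lt_of_not_ge hcase
          have : γd * (C * θ n) ≤ γd * Δ n := by nlinarith
          calc c ≤ γd * (C * ε) := min_le_right _ _
            _ ≤ γd * Δ n := h1.trans this
            _ ≤ Δ (n + 1) := (hstep n).2 hcase
    have h2 : ∀ᶠ k in atTop, Δ k < c := hΔ0.eventually_lt_const hc
    obtain ⟨k, hk1, hk2⟩ := ((eventually_ge_atTop K).and h2).exists
    exact absurd (hlow k hk1) (not_le.mpr hk2)
  refine le_antisymm ?_ ?_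
  · refine le_of_forall_pos_le_add fun ε hε => ?_
    have := liminf_le_of_frequently_le (key ε hε) hbdd
    linarith
  · exact le_liminf_of_le (IsCoboundedUnder.of_frequently_le (key 1 one_pos))
      (Eventually.of_forall hθ)
end

section
/- Suppose a trust-region ratio satisfies 1 - rho_k = (f(x^k + s^k) - v_k - (1/2) s^{kT} H^k s^k) / (f(x^k) - v_k - (1/2) s^{kT} H^k s^k), the denominator satisfies the Cauchy-decrease bound f(x^k) - v_k - (1/2)s^{kT}H^k s^k >= kappa_fcd * chi_k * min{chi_k/kappa_H, Delta_k, 1} > 0, the numerator satisfies f(x^k+s^k) - v_k - (1/2)s^{kT}H^ks^k <= A * Delta_k^2 for a constant A > 0, and Delta_k <= min{1, C*chi_k} where C = min{ (kappa_fcd(1-eta_1))/A, sqrt(kappa_fcd(1-eta_1)/(A kappa_H)) } with eta_1 ∈ (0,1). Then rho_k >= eta_1. -/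
theorem stmt8
    (fx fxs v q χ Δ ρ κfcd κH η₁ A C : ℝ)
    (hχ : 0 < χ) (hΔ : 0 < Δ)
    (hκfcd : 0 < κfcd) (hκfcd1 : κfcd < 1)
    (hκH : 0 < κH) (hη₁ : 0 < η₁) (hη₁1 : η₁ < 1) (hA : 0 < A)
    (hC : C = min (κfcd * (1 - η₁) / A) (Real.sqrt (κfcd * (1 - η₁) / (A * κH))))
    (hρ : 1 - ρ = (fxs - v - q) / (fx - v - q))
    (hden : fx - v - q ≥ κfcd * χ * min (χ / κH) (min Δ 1))
    (hdenpos : 0 < fx - v - q)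
    (hnum : fxs - v - q ≤ A * Δ ^ 2)
    (hΔbound : Δ ≤ min 1 (C * χ)) :
    ρ ≥ η₁ := by
  have hη' : 0 < 1 - η₁ := by linarith
  have hΔ1 : Δ ≤ 1 := hΔbound.trans (min_le_left _ _)
  have hCχ : Δ ≤ C * χ := hΔbound.trans (min_le_right _ _)
  have key : A * Δ ^ 2 ≤ (1 - η₁) * (κfcd * χ * min (χ / κH) (min Δ 1)) := by
    rcases le_total (χ / κH) Δ with h | h
    · have hmin : min (χ / κH) (min Δ 1) = χ / κH :=
        min_eq_left (le_min h (h.trans hΔ1))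
      rw [hmin]
      have hC2 : C ≤ Real.sqrt (κfcd * (1 - η₁) / (A * κH)) := by
        rw [hC]; exact min_le_right _ _
      have hΔle : Δ ≤ Real.sqrt (κfcd * (1 - η₁) / (A * κH)) * χ :=
        hCχ.trans (mul_le_mul_of_nonneg_right hC2 hχ.le)
      have hsnn : (0:ℝ) ≤ κfcd * (1 - η₁) / (A * κH) := by positivity
      have hss : Real.sqrt (κfcd * (1 - η₁) / (A * κH)) *
          Real.sqrt (κfcd * (1 - η₁) / (A * κH)) = κfcd * (1 - η₁) / (A * κH) :=
        Real.mul_self_sqrt hsnn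
      have hΔsq : Δ * Δ ≤ κfcd * (1 - η₁) / (A * κH) * (χ * χ) := by
        calc Δ * Δ ≤ (Real.sqrt (κfcd * (1 - η₁) / (A * κH)) * χ) *
            (Real.sqrt (κfcd * (1 - η₁) / (A * κH)) * χ) :=
          mul_le_mul hΔle hΔle hΔ.le (by positivity)
        _ = κfcd * (1 - η₁) / (A * κH) * (χ * χ) := by rw [mul_mul_mul_comm, hss]
      have h2 : A * (Δ * Δ) ≤ A * (κfcd * (1 - η₁) / (A * κH) * (χ * χ)) :=
        mul_le_mul_of_nonneg_left hΔsq hA.le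
      calc A * Δ ^ 2 = A * (Δ * Δ) := by ring
        _ ≤ A * (κfcd * (1 - η₁) / (A * κH) * (χ * χ)) := h2
        _ = (1 - η₁) * (κfcd * χ * (χ / κH)) := by field_simp
    · have hmin : min (χ / κH) (min Δ 1) = Δ := by
        rw [min_eq_left hΔ1, min_eq_right h]
      rw [hmin]
      have hC1 : C ≤ κfcd * (1 - η₁) / A := by rw [hC]; exact min_le_left _ _
      have hAΔ : A * Δ ≤ κfcd * (1 - η₁) * χ := by
        have h1 : C * χ ≤ κfcd * (1 - η₁) / A * χ :=
          mul_le_mul_of_nonneg_right hC1 hχ.le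
        have h2 : A * Δ ≤ A * (κfcd * (1 - η₁) / A * χ) := by nlinarith
        calc A * Δ ≤ A * (κfcd * (1 - η₁) / A * χ) := h2
          _ = κfcd * (1 - η₁) * χ := by field_simp
      nlinarith [mul_le_mul_of_nonneg_right hAΔ hΔ.le]
  have hfinal : fxs - v - q ≤ (1 - η₁) * (fx - v - q) := by
    have := mul_le_mul_of_nonneg_left hden hη'.le
    linarith
  have hdiv : (fxs - v - q) / (fx - v - q) ≤ 1 - η₁ :=
    (div_le_iff₀ hdenpos).mpr (by linarith)
  linarith [hρ ▸ hdiv]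
end
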